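/- arXiv:2509.14032 — 3 statements merged into one kernel-verified Lean document; each statement's English description precedes it below -/
import Mathlib

section
/- Let C ⊆ X₁ × ⋯ × Xₘ be the feasible set {x ∈ X : cⱼ(x) ≥ αⱼ for all j}, where each Xᵢ ⊆ ℝ^{dᵢ} is convex and each constraint cⱼ is concave in xᵢ for each fixed x_{−i}. Let C′ be a connected component of C. Then for any player i and fixed x_{−i}, the slice C′ᵢ(x_{−i}) := {xᵢ ∈ Xᵢ : (xᵢ, x_{−i}) ∈ C′} is convex. -/
/-!
Along the line of player `i` the feasible set is cut out by the convex set `Xᵢ` and by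
superlevel sets of functions concave in `xᵢ`, so its slice is convex, hence connected. The
continuous image of that slice under `xᵢ ↦ (xᵢ, x₋ᵢ)` is therefore a connected subset of `C`,
so it lies entirely inside any component `C'` that it meets: the slice of `C'` is either empty or
the whole (convex) slice of `C`.
-/

open Function Set

theorem preimage_connectedComponentIn_eq_of_nonempty {α β : Type*} [TopologicalSpace α]
    [TopologicalSpace β] {g : α → β} (hg : Continuous g) {C : Set β}
    (hC : IsPreconnected (g ⁻¹' C)) {x₀ : β} (hne : (g ⁻¹' connectedComponentIn C x₀).Nonempty) :
    g ⁻¹' connectedComponentIn C x₀ = g ⁻¹' C := by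
  obtain ⟨w, hw⟩ := hne
  refine (preimage_mono (connectedComponentIn_subset C x₀)).antisymm fun y hy => ?_
  have himage : g '' (g ⁻¹' C) ⊆ connectedComponentIn C (g w) :=
    (hC.image g hg.continuousOn).subset_connectedComponentIn
      (mem_image_of_mem g (connectedComponentIn_subset C x₀ hw)) (image_preimage_subset g C)
  rw [mem_preimage, connectedComponentIn_eq hw]
  exact himage (mem_image_of_mem g hy)

theorem Convex.preimage_connectedComponentIn {E β : Type*} [AddCommGroup E] [Module ℝ E]
    [TopologicalSpace E] [IsTopologicalAddGroup E] [ContinuousSMul ℝ E] [TopologicalSpace β]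
    {g : E → β} (hg : Continuous g) {C : Set β} (hC : Convex ℝ (g ⁻¹' C)) (x₀ : β) :
    Convex ℝ (g ⁻¹' connectedComponentIn C x₀) := by
  rcases (g ⁻¹' connectedComponentIn C x₀).eq_empty_or_nonempty with hempty | hne
  · exact hempty ▸ convex_empty
  · rwa [preimage_connectedComponentIn_eq_of_nonempty hg hC.isPreconnected hne]

section Slices

variable {𝕜 ι κ β : Type*} [Semiring 𝕜] [PartialOrder 𝕜] [DecidableEq ι] {E : ι → Type*}
  [∀ i, AddCommMonoid (E i)] [∀ i, Module 𝕜 (E i)] {X : ∀ i, Set (E i)}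

theorem convex_setOf_update_mem_univ_pi (hX : ∀ i, Convex 𝕜 (X i)) (x : ∀ i, E i) (i : ι) :
    Convex 𝕜 {xi | update x i xi ∈ univ.pi X} := by
  simp only [update_mem_pi_iff, mem_univ, forall_const]
  by_cases hx : x ∈ (univ \ {i}).pi X
  · simpa only [hx, true_and, ofPred_mem_eq] using hX i
  · simpa only [hx, false_and, ofPred_false] using convex_empty

theorem convex_setOf_update_mem_of_concaveOn [AddCommMonoid β] [PartialOrder β]
    [IsOrderedAddMonoid β] [Module 𝕜 β] [PosSMulMono 𝕜 β] (hX : ∀ i, Convex 𝕜 (X i))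
    {c : κ → (∀ i, E i) → β} {α : κ → β} (x : ∀ i, E i) (i : ι)
    (hconc : ∀ j, ConcaveOn 𝕜 (X i) fun xi => c j (update x i xi)) :
    Convex 𝕜 {xi | update x i xi ∈ {x | (∀ i, x i ∈ X i) ∧ ∀ j, α j ≤ c j x}} := by
  have hslice : {xi | update x i xi ∈ {x | (∀ i, x i ∈ X i) ∧ ∀ j, α j ≤ c j x}} =
      {xi | update x i xi ∈ univ.pi X} ∩ ⋂ j, {xi ∈ X i | α j ≤ c j (update x i xi)} := by
    ext xi
    have hXi : (∀ k, update x i xi k ∈ X k) → xi ∈ X i := fun h => by simpa using h i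
    simp only [mem_ofPred_eq, mem_inter_iff, mem_iInter, mem_univ_pi]
    exact ⟨fun ⟨hmem, hc⟩ => ⟨hmem, fun j => ⟨hXi hmem, hc j⟩⟩,
      fun ⟨hmem, hc⟩ => ⟨hmem, fun j => (hc j).2⟩⟩
  rw [hslice]
  exact (convex_setOf_update_mem_univ_pi hX x i).inter
    (convex_iInter fun j => (hconc j).convex_ge (α j))

end Slices

theorem slice_of_connectedComponent_convex_general (m : ℕ) (d : Fin m → ℕ)
    (X : ∀ i, Set (EuclideanSpace ℝ (Fin (d i))))
    (hXconv : ∀ i, Convex ℝ (X i))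
    (b : ℕ) (c : Fin b → (∀ i, EuclideanSpace ℝ (Fin (d i))) → ℝ) (α : Fin b → ℝ)
    (hconc : ∀ j i (x : ∀ i, EuclideanSpace ℝ (Fin (d i))),
      ConcaveOn ℝ (X i) (fun xi => c j (Function.update x i xi)))
    (C : Set (∀ i, EuclideanSpace ℝ (Fin (d i))))
    (hC : C = {x | (∀ i, x i ∈ X i) ∧ ∀ j, α j ≤ c j x})
    (x₀ : ∀ i, EuclideanSpace ℝ (Fin (d i)))
    (i : Fin m) (x : ∀ i, EuclideanSpace ℝ (Fin (d i))) :
    Convex ℝ {xi : EuclideanSpace ℝ (Fin (d i)) |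
      Function.update x i xi ∈ connectedComponentIn C x₀} := by
  have hslice : Convex ℝ (update x i ⁻¹' C) := by
    subst hC
    exact convex_setOf_update_mem_of_concaveOn hXconv x i fun j => hconc j i x
  exact hslice.preimage_connectedComponentIn (continuous_const.update i continuous_id) x₀

/-- Playerwise concavity of constraints implies convexity of the playerwise slices of any
connected component `C'` of the feasible set `C`. -/
theorem slice_of_connectedComponent_convex (m : ℕ) (d : Fin m → ℕ)
    (X : ∀ i, Set (EuclideanSpace ℝ (Fin (d i))))
    (hXconv : ∀ i, Convex ℝ (X i)) (hXcomp : ∀ i, IsCompact (X i))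
    (b : ℕ) (c : Fin b → (∀ i, EuclideanSpace ℝ (Fin (d i))) → ℝ) (α : Fin b → ℝ)
    (hccont : ∀ j, Continuous (c j))
    (hconc : ∀ j i (x : ∀ i, EuclideanSpace ℝ (Fin (d i))),
      ConcaveOn ℝ (X i) (fun xi => c j (Function.update x i xi)))
    (C : Set (∀ i, EuclideanSpace ℝ (Fin (d i))))
    (hC : C = {x | (∀ i, x i ∈ X i) ∧ ∀ j, α j ≤ c j x})
    (x₀ : ∀ i, EuclideanSpace ℝ (Fin (d i))) (hx₀ : x₀ ∈ C)
    (i : Fin m) (x : ∀ i, EuclideanSpace ℝ (Fin (d i))) :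
    Convex ℝ {xi : EuclideanSpace ℝ (Fin (d i)) |
      Function.update x i xi ∈ connectedComponentIn C x₀} :=
  slice_of_connectedComponent_convex_general m d X hXconv b c α hconc C hC x₀ i x
end

section
/- (Perturbed projected gradient ascent does not decrease f.) Let Ω ⊂ ℝⁿ be closed convex, f differentiable, κ ≥ 1. Define x⁺ = P_Ω[x + (1/κ)∇f(x)] and F(x) = κ(x⁺ − x), and assume local κ-smoothness of f along relevant segments. For a perturbation δ ∈ ℝⁿ, let x̃⁺ = P_Ω[x + (1/κ)(∇f(x) + δ)]. If ‖F(x)‖ ≥ 3‖δ‖, then f(x̃⁺) ≥ f(x). -/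
open scoped RealInnerProductSpace

/-! Testing the variational inequality of `x̃⁺ = P_Ω[x + (∇f(x) + δ)/κ]` at `x` gives
`κ‖x̃⁺ - x‖² ≤ ⟪∇f(x) + δ, x̃⁺ - x⟫`, and non-expansiveness of `P_Ω` gives `κ‖x⁺ - x̃⁺‖ ≤ ‖δ‖`,
so `‖F(x)‖ ≥ 3‖δ‖` forces `κ‖x̃⁺ - x‖ ≥ 2‖δ‖`. The descent lemma along `[x, x̃⁺]` then yields
`f(x̃⁺) - f(x) ≥ ‖x̃⁺ - x‖ (κ‖x̃⁺ - x‖ - 2‖δ‖) / 2 ≥ 0`. -/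

section InnerProductSpace

variable {E : Type*} [NormedAddCommGroup E] [InnerProductSpace ℝ E]

theorem norm_sub_le_of_inner_sub_sub_nonpos {a b p q : E} (hp : ⟪a - p, q - p⟫ ≤ 0)
    (hq : ⟪b - q, p - q⟫ ≤ 0) : ‖p - q‖ ≤ ‖a - b‖ := by
  have hsq : ‖p - q‖ ^ 2 ≤ ‖a - b‖ * ‖p - q‖ := calc
    ‖p - q‖ ^ 2 = ⟪a - b, p - q⟫ + ⟪a - p, q - p⟫ + ⟪b - q, p - q⟫ := by
      rw [← real_inner_self_eq_norm_sq]
      simp only [inner_sub_left, inner_sub_right, real_inner_comm]; ring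
    _ ≤ ⟪a - b, p - q⟫ := by linarith
    _ ≤ ‖a - b‖ * ‖p - q‖ := real_inner_le_norm _ _
  rcases (norm_nonneg (p - q)).eq_or_lt with h | h
  · rw [← h]; exact norm_nonneg _
  · nlinarith

theorem mul_norm_sub_sq_le_inner_of_inner_nonpos {x v p : E} {κ : ℝ} (hκ : 0 < κ)
    (h : ⟪x + (1 / κ) • v - p, x - p⟫ ≤ 0) : κ * ‖p - x‖ ^ 2 ≤ ⟪v, p - x⟫ := by
  have hsplit : ⟪x + (1 / κ) • v - p, x - p⟫ = ‖p - x‖ ^ 2 - (1 / κ) * ⟪v, p - x⟫ := by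
    rw [show x + (1 / κ) • v - p = (1 / κ) • v - (p - x) by abel, ← neg_sub p x,
      inner_neg_right, inner_sub_left, real_inner_smul_left, real_inner_self_eq_norm_sq]
    ring
  rw [hsplit] at h
  have := mul_le_mul_of_nonneg_left h hκ.le
  rw [mul_sub, ← mul_assoc, mul_one_div_cancel hκ.ne', one_mul] at this
  linarith

variable [CompleteSpace E]

theorem hasDerivAt_comp_add_smul {f : E → ℝ} {x d : E} {t : ℝ}
    (hf : DifferentiableAt ℝ f (x + t • d)) :
    HasDerivAt (fun s : ℝ => f (x + s • d)) ⟪gradient f (x + t • d), d⟫ t := by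
  have hline : HasDerivAt (fun s : ℝ => x + s • d) d t := by
    simpa using ((hasDerivAt_id t).smul_const d).const_add x
  have := hf.hasFDerivAt.comp_hasDerivAt t hline
  rw [← inner_gradient_left] at this
  exact this

theorem add_inner_gradient_sub_le_of_gradient_lipschitz_on_segment {f : E → ℝ} {x y : E}
    {κ : ℝ} (hdiff : ∀ z ∈ segment ℝ x y, DifferentiableAt ℝ f z)
    (hlip : ∀ z ∈ segment ℝ x y, ‖gradient f z - gradient f x‖ ≤ κ * ‖z - x‖) :
    f x + ⟪gradient f x, y - x⟫ - κ / 2 * ‖y - x‖ ^ 2 ≤ f y := by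
  set d := y - x
  have hseg : ∀ t ∈ Set.Icc (0 : ℝ) 1, x + t • d ∈ segment ℝ x y := fun t ht => by
    rw [segment_eq_image']; exact ⟨t, ht, rfl⟩
  -- `φ t = f (x + t d) - t ⟪∇f x, d⟫ + κ‖d‖²t²/2` is nondecreasing on `[0, 1]`
  set φ : ℝ → ℝ := fun t => f (x + t • d) - t * ⟪gradient f x, d⟫ + κ / 2 * ‖d‖ ^ 2 * t ^ 2
  have hφ' : ∀ t ∈ Set.Icc (0 : ℝ) 1, HasDerivAt φ
      (⟪gradient f (x + t • d) - gradient f x, d⟫ + κ * t * ‖d‖ ^ 2) t := fun t ht => by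
    have := ((hasDerivAt_comp_add_smul (hdiff _ (hseg t ht))).sub
      ((hasDerivAt_id t).mul_const ⟪gradient f x, d⟫)).add
      ((hasDerivAt_pow 2 t).const_mul (κ / 2 * ‖d‖ ^ 2))
    refine this.congr_deriv ?_
    rw [inner_sub_left]; push_cast; ring
  have hmono : MonotoneOn φ (Set.Icc 0 1) := by
    refine monotoneOn_of_hasDerivWithinAt_nonneg (convex_Icc 0 1)
      (fun t ht => (hφ' t ht).continuousAt.continuousWithinAt)
      (fun t ht => (hφ' t (interior_subset ht)).hasDerivWithinAt) fun t ht => ?_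
    rw [interior_Icc] at ht
    have ht0 : 0 ≤ t := ht.1.le
    have hlip_t := hlip _ (hseg t ⟨ht0, ht.2.le⟩)
    rw [add_sub_cancel_left, norm_smul, Real.norm_of_nonneg ht0] at hlip_t
    have hcs := neg_abs_le ⟪gradient f (x + t • d) - gradient f x, d⟫
    have := abs_real_inner_le_norm (gradient f (x + t • d) - gradient f x) d
    nlinarith [mul_le_mul_of_nonneg_right hlip_t (norm_nonneg d)]
  have h01 := hmono (Set.left_mem_Icc.2 zero_le_one) (Set.right_mem_Icc.2 zero_le_one)
    zero_le_one
  simp only [φ, zero_smul, add_zero, zero_mul, sub_zero, one_smul, one_mul, one_pow, mul_one,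
    ne_eq, OfNat.ofNat_ne_zero, not_false_eq_true, zero_pow] at h01
  rw [add_sub_cancel] at h01
  linarith

end InnerProductSpace

theorem perturbed_projected_step_no_decrease_general (n : ℕ)
    (Ω : Set (EuclideanSpace ℝ (Fin n)))
    (f : EuclideanSpace ℝ (Fin n) → ℝ) (κ : ℝ) (hκ : 1 ≤ κ)
    (δ : EuclideanSpace ℝ (Fin n))
    (x xp xtp : EuclideanSpace ℝ (Fin n)) (hx : x ∈ Ω) (hxp : xp ∈ Ω) (hxtp : xtp ∈ Ω)
    (hproj : ∀ z ∈ Ω, ⟪x + (1 / κ) • gradient f x - xp, z - xp⟫ ≤ 0)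
    (hprojt : ∀ z ∈ Ω, ⟪x + (1 / κ) • (gradient f x + δ) - xtp, z - xtp⟫ ≤ 0)
    (hdiff : ∀ y ∈ segment ℝ x xp ∪ segment ℝ x xtp, DifferentiableAt ℝ f y)
    (hsmooth : ∀ y ∈ segment ℝ x xp ∪ segment ℝ x xtp,
      ‖gradient f y - gradient f x‖ ≤ κ * ‖y - x‖)
    (hF : 3 * ‖δ‖ ≤ ‖κ • (xp - x)‖) :
    f x ≤ f xtp := by
  have hκ0 : 0 < κ := by linarith
  set g := gradient f x
  set d := xtp - x
  have hascent : κ * ‖d‖ ^ 2 ≤ ⟪g + δ, d⟫ :=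
    mul_norm_sub_sq_le_inner_of_inner_nonpos hκ0 (hprojt x hx)
  have hclose : κ * ‖xp - xtp‖ ≤ ‖δ‖ := by
    have := norm_sub_le_of_inner_sub_sub_nonpos (hproj xtp hxtp) (hprojt xp hxp)
    rwa [show x + (1 / κ) • g - (x + (1 / κ) • (g + δ)) = -((1 / κ) • δ) by
      rw [smul_add]; abel, norm_neg, norm_smul, Real.norm_of_nonneg (by positivity),
      one_div_mul_eq_div, le_div_iff₀ hκ0, mul_comm] at this
  have hlong : 2 * ‖δ‖ ≤ κ * ‖d‖ := by
    rw [norm_smul, Real.norm_of_nonneg hκ0.le] at hF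
    have := norm_sub_le_norm_sub_add_norm_sub xp xtp x
    nlinarith
  have hdesc := add_inner_gradient_sub_le_of_gradient_lipschitz_on_segment
    (fun z hz => hdiff z (Or.inr hz)) (fun z hz => hsmooth z (Or.inr hz))
  have hδd := real_inner_le_norm δ d
  rw [inner_add_left] at hascent
  nlinarith [mul_nonneg (norm_nonneg d) (sub_nonneg.2 hlong)]

/-- A perturbed projected gradient ascent step does not decrease `f`: with
`x⁺ = P_Ω[x + (1/κ)∇f(x)]`, `F(x) = κ(x⁺ - x)`, `x̃⁺ = P_Ω[x + (1/κ)(∇f(x) + δ)]`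
(both projections characterized by their variational inequalities), local `κ`-smoothness
along the segments `[x,x⁺]` and `[x,x̃⁺]`, and `‖F(x)‖ ≥ 3‖δ‖`, we get `f(x̃⁺) ≥ f(x)`. -/
theorem perturbed_projected_step_no_decrease (n : ℕ)
    (Ω : Set (EuclideanSpace ℝ (Fin n))) (hΩc : IsClosed Ω) (hΩconv : Convex ℝ Ω)
    (f : EuclideanSpace ℝ (Fin n) → ℝ) (κ : ℝ) (hκ : 1 ≤ κ)
    (δ : EuclideanSpace ℝ (Fin n))
    (x xp xtp : EuclideanSpace ℝ (Fin n)) (hx : x ∈ Ω) (hxp : xp ∈ Ω) (hxtp : xtp ∈ Ω)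
    (hproj : ∀ z ∈ Ω, ⟪x + (1 / κ) • gradient f x - xp, z - xp⟫ ≤ 0)
    (hprojt : ∀ z ∈ Ω, ⟪x + (1 / κ) • (gradient f x + δ) - xtp, z - xtp⟫ ≤ 0)
    (hdiff : ∀ y ∈ segment ℝ x xp ∪ segment ℝ x xtp, DifferentiableAt ℝ f y)
    (hsmooth : ∀ y ∈ segment ℝ x xp ∪ segment ℝ x xtp,
      ‖gradient f y - gradient f x‖ ≤ κ * ‖y - x‖)
    (hF : 3 * ‖δ‖ ≤ ‖κ • (xp - x)‖) :
    f x ≤ f xtp :=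
  perturbed_projected_step_no_decrease_general n Ω f κ hκ δ x xp xtp hx hxp hxtp hproj hprojt hdiff
    hsmooth hF
end

section
/- (Feasibility margin preservation under small steps.) Suppose x⁽ᵗ⁾ ∈ C is β-feasible (cⱼ(x⁽ᵗ⁾) − αⱼ ≥ β ∀j), each uᵢ and cⱼ is L-Lipschitz, and each player updates xᵢ⁽ᵗ⁺¹⁾ = P_{Xᵢ}[xᵢ⁽ᵗ⁾ + γ∇_{xᵢ}B^η_i(x⁽ᵗ⁾)] with B^η_i(x) = uᵢ(x) + η Σⱼ log(cⱼ(x) − αⱼ). If γ ≤ β²/(2mL²(β + ηb)), then every point x̂ on the segment [x⁽ᵗ⁾, x⁽ᵗ⁺¹⁾] is (β/2)-feasible, i.e., cⱼ(x̂) − αⱼ ≥ β/2 for all j ∈ [b]. -/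
/-!
Near a `β`-feasible point every constraint slack stays positive, so the log-barrier terms are
locally Lipschitz and each partial gradient of `B^η_i` has norm at most `L + ηbL/β`. Testing the
projection's variational inequality at `z = xᵢ` bounds each player's move by `γ` times that norm,
so the joint move has norm at most `mγ(L + ηbL/β) ≤ β/(2L)`, and `L`-Lipschitz continuity of `cⱼ`
loses at most `β/2` of slack along the segment.
-/

open scoped RealInnerProductSpace
open Filter Topology

lemma Real.abs_log_sub_log_le_div {s a a' : ℝ} (hs : 0 < s) (ha : s ≤ a) (ha' : s ≤ a') :
    |Real.log a - Real.log a'| ≤ |a - a'| / s := by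
  wlog h : a' ≤ a generalizing a a'
  · rw [abs_sub_comm, abs_sub_comm a]
    exact this ha' ha (le_of_not_ge h)
  have ha'0 : 0 < a' := hs.trans_le ha'
  rw [abs_of_nonneg (sub_nonneg.2 (Real.log_le_log ha'0 h)), abs_of_nonneg (sub_nonneg.2 h),
    ← Real.log_div (hs.trans_le ha).ne' ha'0.ne']
  calc Real.log (a / a') ≤ a / a' - 1 := Real.log_le_sub_one_of_pos (div_pos (hs.trans_le ha) ha'0)
    _ = (a - a') / a' := by field_simp
    _ ≤ (a - a') / s := div_le_div_of_nonneg_left (sub_nonneg.2 h) hs ha'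

section Barrier

variable {E : Type*} [NormedAddCommGroup E] {b : ℕ} {f : E → ℝ} {g : Fin b → E → ℝ} {L η : ℝ}

lemma abs_barrier_sub_le (hη : 0 ≤ η) (hf : ∀ y y', |f y - f y'| ≤ L * ‖y - y'‖)
    (hg : ∀ j y y', |g j y - g j y'| ≤ L * ‖y - y'‖) {s : ℝ} (hs : 0 < s) {y y' : E}
    (hy : ∀ j, s ≤ g j y) (hy' : ∀ j, s ≤ g j y') :
    |(f y + η * ∑ j, Real.log (g j y)) - (f y' + η * ∑ j, Real.log (g j y'))|
      ≤ (L + η * b * L / s) * ‖y - y'‖ := by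
  have hlog : ∀ j, |Real.log (g j y) - Real.log (g j y')| ≤ L * ‖y - y'‖ / s := fun j =>
    (Real.abs_log_sub_log_le_div hs (hy j) (hy' j)).trans
      (div_le_div_of_nonneg_right (hg j y y') hs.le)
  have hsum : |∑ j, (Real.log (g j y) - Real.log (g j y'))| ≤ b * (L * ‖y - y'‖ / s) := by
    simpa using (Finset.abs_sum_le_sum_abs _ Finset.univ).trans
      (Finset.sum_le_sum fun j _ => hlog j)
  calc _ = |(f y - f y') + η * ∑ j, (Real.log (g j y) - Real.log (g j y'))| := by
        rw [Finset.sum_sub_distrib]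
        ring_nf
    _ ≤ |f y - f y'| + η * |∑ j, (Real.log (g j y) - Real.log (g j y'))| :=
        (abs_add_le _ _).trans_eq (by rw [abs_mul, abs_of_nonneg hη])
    _ ≤ L * ‖y - y'‖ + η * (b * (L * ‖y - y'‖ / s)) := by gcongr; exact hf y y'
    _ = (L + η * b * L / s) * ‖y - y'‖ := by ring

variable [NormedSpace ℝ E]

lemma norm_fderiv_barrier_le (hL : 0 < L) (hη : 0 ≤ η)
    (hf : ∀ y y', |f y - f y'| ≤ L * ‖y - y'‖) (hg : ∀ j y y', |g j y - g j y'| ≤ L * ‖y - y'‖)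
    {β : ℝ} (hβ : 0 < β) {x₀ : E} (hx₀ : ∀ j, β ≤ g j x₀) :
    ‖fderiv ℝ (fun y => f y + η * ∑ j, Real.log (g j y)) x₀‖ ≤ L + η * b * L / β := by
  have hlim : Tendsto (fun s => L + η * b * L / s) (𝓝[<] β) (𝓝 (L + η * b * L / β)) :=
    (continuousAt_const.add (continuousAt_const.div continuousAt_id hβ.ne')).tendsto.mono_left
      nhdsWithin_le_nhds
  -- The slack is only `≥ s` on a small ball around `x₀` for `s < β`; let `s → β⁻`.
  refine ge_of_tendsto hlim ?_
  filter_upwards [Ioo_mem_nhdsLT hβ] with s ⟨hs, hsβ⟩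
  refine norm_fderiv_le_of_lip' ℝ (by positivity) ?_
  filter_upwards [Metric.ball_mem_nhds x₀ (div_pos (sub_pos.2 hsβ) hL)] with y hy
  have hgy : ∀ j, s ≤ g j y := fun j => by
    have hclose : L * ‖y - x₀‖ < β - s := by
      rwa [mem_ball_iff_norm, lt_div_iff₀' hL] at hy
    linarith [(abs_le.1 (hg j y x₀)).1, hx₀ j]
  rw [Real.norm_eq_abs]
  exact abs_barrier_sub_le hη hf hg hs hgy fun j => hsβ.le.trans (hx₀ j)

end Barrier

lemma norm_gradient_eq_norm_fderiv {F : Type*} [NormedAddCommGroup F] [InnerProductSpace ℝ F]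
    [CompleteSpace F] (f : F → ℝ) (x : F) : ‖gradient f x‖ = ‖fderiv ℝ f x‖ := by
  rw [← toDual_gradient, LinearIsometryEquiv.norm_map]

lemma norm_sub_le_of_inner_step_nonpos {F : Type*} [NormedAddCommGroup F] [InnerProductSpace ℝ F]
    {p q v : F} {γ : ℝ} (hγ : 0 ≤ γ) (h : ⟪p + γ • v - q, p - q⟫ ≤ 0) : ‖q - p‖ ≤ γ * ‖v‖ := by
  have hexpand : ⟪p + γ • v - q, p - q⟫ = ‖p - q‖ ^ 2 + γ * ⟪v, p - q⟫ := by
    rw [show p + γ • v - q = (p - q) + γ • v by abel, inner_add_left,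
      real_inner_self_eq_norm_sq, real_inner_smul_left]
  have hcs := mul_le_mul_of_nonneg_left (neg_le_of_abs_le (abs_real_inner_le_norm v (p - q))) hγ
  rw [norm_sub_rev]
  nlinarith [norm_nonneg (p - q), mul_nonneg hγ (norm_nonneg v)]

lemma PiLp.norm_le_sum_norm {ι : Type*} [Fintype ι] {β : ι → Type*}
    [∀ i, SeminormedAddCommGroup (β i)] (v : PiLp 2 β) : ‖v‖ ≤ ∑ i, ‖v i‖ := by
  rw [PiLp.norm_eq_of_L2]
  exact Real.sqrt_le_iff.2 ⟨by positivity,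
    Finset.sum_sq_le_sq_sum_of_nonneg fun _ _ => norm_nonneg _⟩

lemma PiLp.norm_toLp_update_sub_toLp_update {ι : Type*} [Fintype ι] [DecidableEq ι]
    {p : ENNReal} [Fact (1 ≤ p)] {β : ι → Type*} [∀ i, SeminormedAddCommGroup (β i)]
    (x : ∀ i, β i) (i : ι) (y y' : β i) :
    ‖WithLp.toLp p (Function.update x i y) - WithLp.toLp p (Function.update x i y')‖ = ‖y - y'‖ := by
  rw [← PiLp.norm_single p β i (y - y')]
  congr 1
  ext k
  by_cases hk : k = i
  · subst hk; simp
  · simp [Function.update_of_ne hk, Pi.single_eq_of_ne hk]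

theorem step_preserves_feasibility_general {ι : Type*} [Fintype ι] [DecidableEq ι] (d : ι → ℕ)
    (X : ∀ i, Set (EuclideanSpace ℝ (Fin (d i))))
    (b : ℕ) (u : ι → PiLp 2 (fun i => EuclideanSpace ℝ (Fin (d i))) → ℝ)
    (c : Fin b → PiLp 2 (fun i => EuclideanSpace ℝ (Fin (d i))) → ℝ) (α : Fin b → ℝ)
    (L β η γ : ℝ) (hL : 0 < L) (hβ : 0 < β) (hη : 0 < η) (hγpos : 0 < γ)
    (huLip : ∀ i (y y' : PiLp 2 fun i => EuclideanSpace ℝ (Fin (d i))),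
      |u i y - u i y'| ≤ L * ‖y - y'‖)
    (hcLip : ∀ j (y y' : PiLp 2 fun i => EuclideanSpace ℝ (Fin (d i))),
      |c j y - c j y'| ≤ L * ‖y - y'‖)
    (x xnext : PiLp 2 fun i => EuclideanSpace ℝ (Fin (d i)))
    (hxX : ∀ i, x i ∈ X i)
    (hfeas : ∀ j, β ≤ c j x - α j)
    (hγ : γ ≤ β ^ 2 / (2 * (Fintype.card ι) * L ^ 2 * (β + η * b)))
    (hproj : ∀ i, ∀ z ∈ X i,
      ⟪x i + γ • gradient (fun xi => u i (WithLp.toLp 2 (Function.update x i xi))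
          + η * ∑ j, Real.log (c j (WithLp.toLp 2 (Function.update x i xi)) - α j)) (x i)
        - xnext i, z - xnext i⟫ ≤ 0) :
    ∀ t ∈ Set.Icc (0:ℝ) 1, ∀ j, β / 2 ≤ c j ((1 - t) • x + t • xnext) - α j := by
  intro t ht j
  have hslice : ∀ {F : PiLp 2 (fun i => EuclideanSpace ℝ (Fin (d i))) → ℝ},
      (∀ y y', |F y - F y'| ≤ L * ‖y - y'‖) → ∀ i y y',
        |F (WithLp.toLp 2 (Function.update x i y)) - F (WithLp.toLp 2 (Function.update x i y'))|
          ≤ L * ‖y - y'‖ := fun hF i y y' =>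
    (hF _ _).trans_eq (by rw [PiLp.norm_toLp_update_sub_toLp_update])
  have hstep : ∀ i, ‖xnext i - x i‖ ≤ γ * (L + η * b * L / β) := fun i => by
    refine (norm_sub_le_of_inner_step_nonpos hγpos.le (hproj i (x i) (hxX i))).trans ?_
    rw [norm_gradient_eq_norm_fderiv]
    gcongr
    refine norm_fderiv_barrier_le hL hη.le (hslice (huLip i) i) (fun j => ?_) hβ (fun j => ?_)
    · simpa only [sub_sub_sub_cancel_right] using hslice (hcLip j) i
    · simpa only [Function.update_eq_self] using hfeas j
  have hmove : L * ‖xnext - x‖ ≤ β / 2 := calc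
    L * ‖xnext - x‖ ≤ L * ∑ i, ‖xnext i - x i‖ := by
      gcongr; simpa only [PiLp.sub_apply] using PiLp.norm_le_sum_norm (xnext - x)
    _ ≤ L * (Fintype.card ι * (γ * (L + η * b * L / β))) := by
      gcongr; simpa using Finset.sum_le_card_nsmul Finset.univ _ _ fun i _ => hstep i
    _ = γ * (2 * Fintype.card ι * L ^ 2 * (β + η * b)) / (2 * β) := by field_simp
    _ ≤ β ^ 2 / (2 * β) := by
      gcongr; exact mul_le_of_le_div₀ (by positivity) (by positivity) hγ
    _ = β / 2 := by field_simp
  have hseg : (1 - t) • x + t • xnext ∈ segment ℝ x xnext := by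
    rw [segment_eq_image]; exact ⟨t, ht, rfl⟩
  have hnear := mul_le_mul_of_nonneg_left (norm_sub_le_of_mem_segment hseg) hL.le
  linarith [(abs_le.1 (hcLip j ((1 - t) • x + t • xnext) x)).1, hfeas j]

/-- Feasibility margin preservation under small steps: if `x` is `β`-feasible, all
utilities and constraints are `L`-Lipschitz in the joint (ℓ₂) variable, each player takes
a projected log-barrier gradient step with stepsize `γ ≤ β²/(2mL²(β+ηb))`, then every
point on the segment between the old and new joint profiles is `β/2`-feasible. -/
theorem step_preserves_feasibility {ι : Type*} [Fintype ι] [DecidableEq ι] (d : ι → ℕ)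
    (X : ∀ i, Set (EuclideanSpace ℝ (Fin (d i))))
    (hXconv : ∀ i, Convex ℝ (X i)) (hXcomp : ∀ i, IsCompact (X i))
    (b : ℕ) (u : ι → PiLp 2 (fun i => EuclideanSpace ℝ (Fin (d i))) → ℝ)
    (c : Fin b → PiLp 2 (fun i => EuclideanSpace ℝ (Fin (d i))) → ℝ) (α : Fin b → ℝ)
    (L β η γ : ℝ) (hL : 0 < L) (hβ : 0 < β) (hη : 0 < η) (hγpos : 0 < γ)
    (huLip : ∀ i (y y' : PiLp 2 fun i => EuclideanSpace ℝ (Fin (d i))),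
      |u i y - u i y'| ≤ L * ‖y - y'‖)
    (hcLip : ∀ j (y y' : PiLp 2 fun i => EuclideanSpace ℝ (Fin (d i))),
      |c j y - c j y'| ≤ L * ‖y - y'‖)
    (x xnext : PiLp 2 fun i => EuclideanSpace ℝ (Fin (d i)))
    (hxX : ∀ i, x i ∈ X i)
    (hfeas : ∀ j, β ≤ c j x - α j)
    (hγ : γ ≤ β ^ 2 / (2 * (Fintype.card ι) * L ^ 2 * (β + η * b)))
    (hxnextX : ∀ i, xnext i ∈ X i)
    (hproj : ∀ i, ∀ z ∈ X i,
      ⟪x i + γ • gradient (fun xi => u i (WithLp.toLp 2 (Function.update x i xi))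
          + η * ∑ j, Real.log (c j (WithLp.toLp 2 (Function.update x i xi)) - α j)) (x i)
        - xnext i, z - xnext i⟫ ≤ 0) :
    ∀ t ∈ Set.Icc (0:ℝ) 1, ∀ j, β / 2 ≤ c j ((1 - t) • x + t • xnext) - α j :=
  step_preserves_feasibility_general d X b u c α L β η γ hL hβ hη hγpos huLip hcLip x xnext hxX
    hfeas hγ hproj
end
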